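/- Let F : ℝⁿ → ℝ be continuously differentiable, u ∈ ℝⁿ, v ∈ ℝⁿ with ‖v‖₂ = 1, and x, x' ∈ ℝⁿ. Then IG_v(x + u, x' + u, u·F) = IG_v(x, x', F). -/

import Mathlib

open scoped RealInnerProductSpace

/-- The component in direction `v` of integrated gradients along the straight-line path
from `x'` to `x`: `IG_v(x, x', F) = ∫₀¹ ⟨∇F(γ(t)), v⟩ ⟨x − x', v⟩ dt`. -/
noncomputable def IGv {n : ℕ} (x x' : EuclideanSpace ℝ (Fin n))
    (F : EuclideanSpace ℝ (Fin n) → ℝ) (v : EuclideanSpace ℝ (Fin n)) : ℝ :=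
  ∫ t in (0:ℝ)..1, ⟪gradient F (x' + t • (x - x')), v⟫ * ⟪x - x', v⟫

lemma gradient_translate {n : ℕ} (F : EuclideanSpace ℝ (Fin n) → ℝ)
    (hF : ContDiff ℝ 1 F) (u y : EuclideanSpace ℝ (Fin n)) :
    gradient (fun z => F (z - u)) y = gradient F (y - u) := by
  have hd : HasFDerivAt F (fderiv ℝ F (y - u)) (y - u) :=
    (hF.differentiable one_ne_zero (y - u)).hasFDerivAt
  have h2 : HasFDerivAt (fun z : EuclideanSpace ℝ (Fin n) => F (z - u))
      (fderiv ℝ F (y - u)) y := by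
    have := hd.comp y ((hasFDerivAt_id y).sub_const u)
    simp at this
    exact this
  have h3 : fderiv ℝ (fun z : EuclideanSpace ℝ (Fin n) => F (z - u)) y
      = fderiv ℝ F (y - u) := h2.fderiv
  simp [gradient, h3]

/-- for `u ∈ ℝⁿ` and a unit vector `v`,
`IG_v(x + u, x' + u, u·F) = IG_v(x, x', F)`, where `(u·F)(z) = F(z − u)`. -/
theorem IGv_translation_action {n : ℕ} (F : EuclideanSpace ℝ (Fin n) → ℝ)
    (hF : ContDiff ℝ 1 F) (u : EuclideanSpace ℝ (Fin n))
    (v : EuclideanSpace ℝ (Fin n)) (hv : ‖v‖ = 1)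
    (x x' : EuclideanSpace ℝ (Fin n)) :
    IGv (x + u) (x' + u) (fun z => F (z - u)) v = IGv x x' F v := by
  unfold IGv
  have hxy : (x + u) - (x' + u) = x - x' := by abel
  rw [hxy]
  congr 1
  ext t
  rw [gradient_translate F hF u]
  congr 2
  abel
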